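/- arXiv:1312.1259 — 3 statements merged into one kernel-verified Lean document; each statement's English description precedes it below -/
import Mathlib

section
/- Let (S,*) be a symmetric composition superalgebra with a para-unit e. Then (S,·) with product x·y := (e*x)*(y*e) is a Hurwitz superalgebra with unit e, and x*y = x̄·ȳ where x̄ := b(x,e)e − x; i.e., (S,*) is a para-Hurwitz superalgebra. Moreover, if dim S ≥ 3 the para-unit is unique. -/
open QuadraticMap

/-- The sign `(−1)^i` for a parity `i ∈ ℤ₂`, as an element of `F`. -/
def sgn2 (F : Type*) [Field F] : ZMod 2 → F := fun i => if i = 0 then 1 else -1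

/-- `x` is homogeneous of parity `i` with respect to the decomposition `even ⊕ odd`. -/
def IsPar {F S : Type*} [Field F] [AddCommGroup S] [Module F S]
    (even odd : Submodule F S) (x : S) (i : ZMod 2) : Prop :=
  (i = 0 ∧ x ∈ even) ∨ (i = 1 ∧ x ∈ odd)

/-- A composition superalgebra structure on the vector space `S` with (not necessarily
associative, not necessarily unital) bilinear multiplication `mul`: a `ℤ₂`-graded algebra
`S = even ⊕ odd` with a regular quadratic superform `q = (q0, b)` satisfying the composition
superalgebra axioms. -/
structure SuperComp (F S : Type*) [Field F] [AddCommGroup S] [Module F S]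
    (mul : S →ₗ[F] S →ₗ[F] S) where
  even : Submodule F S
  odd : Submodule F S
  compl : IsCompl even odd
  mul_ee : ∀ x ∈ even, ∀ y ∈ even, mul x y ∈ even
  mul_eo : ∀ x ∈ even, ∀ y ∈ odd, mul x y ∈ odd
  mul_oe : ∀ x ∈ odd, ∀ y ∈ even, mul x y ∈ odd
  mul_oo : ∀ x ∈ odd, ∀ y ∈ odd, mul x y ∈ even
  /-- the quadratic form `q0` on the even part -/
  q0 : QuadraticForm F even
  /-- the even supersymmetric bilinear form `b` -/
  b : S →ₗ[F] S →ₗ[F] F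
  /-- on the even part, `b` is the polar form of `q0` -/
  b_polar : ∀ x y : even, b x y = polar q0 x y
  /-- `b` is alternating on the odd part -/
  b_alt_odd : ∀ x ∈ odd, b x x = 0
  b_alt_skew : ∀ x ∈ odd, ∀ y ∈ odd, b x y = - b y x
  /-- `b` is even: even and odd parts are orthogonal -/
  b_eo : ∀ x ∈ even, ∀ y ∈ odd, b x y = 0 ∧ b y x = 0
  /-- regularity of `q0` (KMRT-style) -/
  q0_reg : ∀ x : even, (∀ y : even, polar q0 x y = 0) → q0 x = 0 → (x : S) = 0
  /-- nondegeneracy of `b` on the odd part -/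
  b_odd_nondeg : ∀ x ∈ odd, (∀ y ∈ odd, b x y = 0) → x = 0
  /-- composition axiom i): `q0` is multiplicative on the even part -/
  comp_i : ∀ x y : even, q0 ⟨mul x y, mul_ee x x.2 y y.2⟩ = q0 x * q0 y
  /-- composition axiom ii) -/
  comp_ii₁ : ∀ (x : even) (y z : S), b (mul x y) (mul x z) = q0 x * b y z
  comp_ii₂ : ∀ (x : even) (y z : S), b (mul y x) (mul z x) = q0 x * b y z
  /-- composition axiom iii), for homogeneous elements -/
  comp_iii : ∀ (px py pz pt : ZMod 2) (x y z t : S),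
    IsPar even odd x px → IsPar even odd y py → IsPar even odd z pz → IsPar even odd t pt →
    b (mul x y) (mul z t) + sgn2 F (px * py + px * pz + py * pz) * b (mul z y) (mul x t)
      = sgn2 F (py * pz) * (b x z * b y t)

/-- A Hurwitz superalgebra structure: a unital composition superalgebra. -/
structure HurwitzSuperOn (F S : Type*) [Field F] [AddCommGroup S] [Module F S]
    (mul : S →ₗ[F] S →ₗ[F] S) extends SuperComp F S mul where
  one : S
  one_even : one ∈ even
  one_mul : ∀ x : S, mul one x = x
  mul_one : ∀ x : S, mul x one = x

/-- The new product `x·y := (e*x)*(y*e)` associated to an idempotent `e`. -/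
def dotMul {F S : Type*} [Field F] [AddCommGroup S] [Module F S]
    (mul : S →ₗ[F] S →ₗ[F] S) (e : S) : S →ₗ[F] S →ₗ[F] S :=
  LinearMap.mk₂ F (fun x y => mul (mul e x) (mul y e))
    (by intro m₁ m₂ n; simp)
    (by intro c m n; simp)
    (by intro m n₁ n₂; simp)
    (by intro c m n; simp)

/-- a symmetric composition superalgebra `(S,*)` with a para-unit `e` is
para-Hurwitz: `x·y := (e*x)*(y*e)` is a Hurwitz superalgebra product with unit `e` and the
same norm, `x*y = x̄·ȳ` with `x̄ = b(x,e)e − x`; and if `dim S ≥ 3` the para-unit is unique. -/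
theorem parunit_gives_paraHurwitz {F S : Type*} [Field F] [AddCommGroup S] [Module F S]
    (mul : S →ₗ[F] S →ₗ[F] S) (H : SuperComp F S mul)
    (hsym : ∀ x y z : S, H.b (mul x y) z = H.b x (mul y z))
    (e : S) (he : e ∈ H.even) (hidem : mul e e = e)
    (hpu : ∀ x : S, mul e x = H.b e x • e - x ∧ mul x e = H.b e x • e - x) :
    (∃ H' : HurwitzSuperOn F S (dotMul mul e),
      H'.one = e ∧ H'.even = H.even ∧ H'.odd = H.odd ∧ H'.b = H.b ∧
      (∀ (x : S) (hx : x ∈ H'.even) (hx' : x ∈ H.even),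
        H'.q0 ⟨x, hx⟩ = H.q0 ⟨x, hx'⟩)) ∧
    (∀ x y : S, mul x y = dotMul mul e (H.b x e • e - x) (H.b y e • e - y)) ∧
    (3 ≤ Module.finrank F S →
      ∀ e' : S, e' ∈ H.even → mul e' e' = e' →
        (∀ x : S, mul e' x = H.b e' x • e' - x ∧ mul x e' = H.b e' x • e' - x) →
        e' = e) := by
  classical
  -- e*x = x*e
  have hcomm : ∀ x : S, mul e x = mul x e := fun x => ((hpu x).1).trans ((hpu x).2).symm
  -- b(e,e) • e = 2 • e
  have hA : H.b e e • e = (2:F) • e := by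
    have h := (hpu e).1
    rw [hidem] at h
    rw [two_smul]
    linear_combination (norm := module) -h
  -- symmetry of b against even elements
  have hBsym : ∀ f ∈ H.even, ∀ x : S, H.b x f = H.b f x := by
    intro f hf x
    have hx : x ∈ H.even ⊔ H.odd := by rw [H.compl.codisjoint.eq_top]; trivial
    rcases Submodule.mem_sup.mp hx with ⟨u, hu, v, hv, rfl⟩
    have h1 : H.b u f = H.b f u := by
      rw [H.b_polar ⟨u, hu⟩ ⟨f, hf⟩, H.b_polar ⟨f, hf⟩ ⟨u, hu⟩, polar_comm]
    have h2 := H.b_eo f hf v hv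
    simp only [_root_.map_add, LinearMap.add_apply, h1, h2.1, h2.2, add_zero]
  -- b(e,e) = 2 q0(e)
  have hbee : H.b e e = 2 * H.q0 ⟨e, he⟩ := by
    rw [H.b_polar ⟨e, he⟩ ⟨e, he⟩, polar_self, nsmul_eq_mul]
    norm_num
  -- key relation
  have hE : ∀ z : S, H.b e z * (H.q0 ⟨e, he⟩ - 1) = 0 := by
    intro z
    have h : H.b (mul e e) (mul e z) = H.q0 ⟨e, he⟩ * H.b e z := H.comp_ii₁ ⟨e, he⟩ e z
    rw [hidem, (hpu z).1] at h
    simp only [_root_.map_sub, _root_.map_smul, smul_eq_mul] at h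
    rw [hbee] at h
    linear_combination h
  -- e * (e * x) = x
  have hC : ∀ x : S, mul e (mul e x) = x := by
    intro x
    rw [(hpu (mul e x)).1, (hpu x).1]
    simp only [_root_.map_sub, _root_.map_smul, smul_eq_mul]
    rw [sub_smul, mul_smul, hA]
    module
  -- b(e*y, e*z) = b(y,z)
  have hG : ∀ y z : S, H.b (mul e y) (mul e z) = H.b y z := by
    intro y z
    rw [(hpu y).1, (hpu z).1]
    simp only [_root_.map_sub, _root_.map_smul, LinearMap.sub_apply, LinearMap.smul_apply,
      smul_eq_mul]
    rw [hBsym e he y, hbee]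
    linear_combination (2 * H.b e z) * hE y
  have hGall : ∀ y z : S, H.b (mul y e) (mul z e) = H.b y z := by
    intro y z
    rw [← hcomm y, ← hcomm z]
    exact hG y z
  -- q0 is preserved by x ↦ e*x on the even part
  have hQbar : ∀ (x : S) (hx : x ∈ H.even) (h2 : mul e x ∈ H.even),
      H.q0 ⟨mul e x, h2⟩ = H.q0 ⟨x, hx⟩ := by
    intro x hx h2
    have heq : (⟨mul e x, h2⟩ : H.even) = H.b e x • (⟨e, he⟩ : H.even) - ⟨x, hx⟩ :=
      Subtype.ext (by simpa using (hpu x).1)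
    rw [heq, sub_eq_add_neg, QuadraticMap.map_add (⇑H.q0), QuadraticMap.map_neg,
      QuadraticMap.map_smul, polar_neg_right, polar_smul_left,
      ← H.b_polar ⟨e, he⟩ ⟨x, hx⟩]
    simp only [smul_eq_mul]
    linear_combination (H.b e x) * hE x
  have hQbar2 : ∀ (x : S) (hx : x ∈ H.even) (h2 : mul x e ∈ H.even),
      H.q0 ⟨mul x e, h2⟩ = H.q0 ⟨x, hx⟩ := by
    intro x hx h2
    have heq : (⟨mul x e, h2⟩ : H.even) = ⟨mul e x, (hcomm x) ▸ h2⟩ :=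
      Subtype.ext (hcomm x).symm
    rw [heq, hQbar x hx]
  -- parity is preserved by multiplication with e
  have hParL : ∀ (p : ZMod 2) (x : S), IsPar H.even H.odd x p →
      IsPar H.even H.odd (mul e x) p := by
    rintro p x (⟨hp, hx⟩ | ⟨hp, hx⟩)
    · exact Or.inl ⟨hp, H.mul_ee e he x hx⟩
    · exact Or.inr ⟨hp, H.mul_eo e he x hx⟩
  have hParR : ∀ (p : ZMod 2) (x : S), IsPar H.even H.odd x p →
      IsPar H.even H.odd (mul x e) p := by
    rintro p x (⟨hp, hx⟩ | ⟨hp, hx⟩)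
    · exact Or.inl ⟨hp, H.mul_ee x hx e he⟩
    · exact Or.inr ⟨hp, H.mul_oe x hx e he⟩
  refine ⟨⟨{
      toSuperComp := {
      even := H.even
      odd := H.odd
      compl := H.compl
      mul_ee := fun x hx y hy => H.mul_ee _ (H.mul_ee e he x hx) _ (H.mul_ee y hy e he)
      mul_eo := fun x hx y hy => H.mul_eo _ (H.mul_ee e he x hx) _ (H.mul_oe y hy e he)
      mul_oe := fun x hx y hy => H.mul_oe _ (H.mul_eo e he x hx) _ (H.mul_ee y hy e he)
      mul_oo := fun x hx y hy => H.mul_oo _ (H.mul_eo e he x hx) _ (H.mul_oe y hy e he)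
      q0 := H.q0
      b := H.b
      b_polar := H.b_polar
      b_alt_odd := H.b_alt_odd
      b_alt_skew := H.b_alt_skew
      b_eo := H.b_eo
      q0_reg := H.q0_reg
      b_odd_nondeg := H.b_odd_nondeg
      comp_i := by
        intro x y
        have h1 : mul e (x : S) ∈ H.even := H.mul_ee e he _ x.2
        have h2 : mul (y : S) e ∈ H.even := H.mul_ee _ y.2 e he
        have h : H.q0 ⟨mul (mul e (x : S)) (mul (y : S) e),
            H.mul_ee _ h1 _ h2⟩ = H.q0 ⟨mul e (x : S), h1⟩ * H.q0 ⟨mul (y : S) e, h2⟩ :=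
          H.comp_i ⟨mul e (x : S), h1⟩ ⟨mul (y : S) e, h2⟩
        rw [hQbar _ x.2 h1, hQbar2 _ y.2 h2] at h
        exact h
      comp_ii₁ := by
        intro x y z
        have h1 : mul e (x : S) ∈ H.even := H.mul_ee e he _ x.2
        have h : H.b (mul (mul e (x : S)) (mul y e)) (mul (mul e (x : S)) (mul z e))
            = H.q0 ⟨mul e (x : S), h1⟩ * H.b (mul y e) (mul z e) :=
          H.comp_ii₁ ⟨mul e (x : S), h1⟩ (mul y e) (mul z e)
        rw [hQbar _ x.2 h1, hGall y z] at h
        exact h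
      comp_ii₂ := by
        intro x y z
        have h1 : mul (x : S) e ∈ H.even := H.mul_ee _ x.2 e he
        have h : H.b (mul (mul e y) (mul (x : S) e)) (mul (mul e z) (mul (x : S) e))
            = H.q0 ⟨mul (x : S) e, h1⟩ * H.b (mul e y) (mul e z) :=
          H.comp_ii₂ ⟨mul (x : S) e, h1⟩ (mul e y) (mul e z)
        rw [hQbar2 _ x.2 h1, hG y z] at h
        exact h
      comp_iii := by
        intro px py pz pt x y z t hx hy hz ht
        have h := H.comp_iii px py pz pt (mul e x) (mul y e) (mul e z) (mul t e)
          (hParL px x hx) (hParR py y hy) (hParL pz z hz) (hParR pt t ht)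
        rw [hG x z, hGall y t] at h
        exact h }
      one := e
      one_even := he
      one_mul := by
        intro x
        show mul (mul e e) (mul x e) = x
        rw [hidem, ← hcomm x]
        exact hC x
      mul_one := by
        intro x
        show mul (mul e x) (mul e e) = x
        rw [hidem, ← hcomm (mul e x)]
        exact hC x },
    rfl, rfl, rfl, rfl, fun x hx hx' => rfl⟩, ?_, ?_⟩
  · -- x * y = x̄ · ȳ
    intro x y
    show mul x y = mul (mul e (H.b x e • e - x)) (mul (H.b y e • e - y) e)
    have h1 : mul e (H.b x e • e - x) = x := by
      rw [_root_.map_sub, _root_.map_smul, (hpu x).1, hidem, hBsym e he x]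
      exact sub_sub_cancel _ _
    have h2 : mul (H.b y e • e - y) e = y := by
      rw [← hcomm (H.b y e • e - y), _root_.map_sub, _root_.map_smul, (hpu y).1, hidem,
        hBsym e he y]
      exact sub_sub_cancel _ _
    rw [h1, h2]
  · -- uniqueness of the para-unit
    intro hdim e' he' hidem' hpu'
    have hnt : ¬ (∀ x : S, x = 0) := by
      intro hall
      have hss : Subsingleton S := ⟨fun a b => by rw [hall a, hall b]⟩
      rw [Module.finrank_zero_of_subsingleton] at hdim
      omega
    -- dichotomy: a para-unit has norm 1 unless the algebra is trivial
    have hDich : ∀ (f : S) (hf : f ∈ H.even), mul f f = f →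
        (∀ x : S, mul f x = H.b f x • f - x ∧ mul x f = H.b f x • f - x) →
        (H.q0 ⟨f, hf⟩ = 1 ∨ ∀ x : S, x = 0) := by
      intro f hf hif hpf
      by_cases hq : H.q0 ⟨f, hf⟩ = 1
      · exact Or.inl hq
      right
      have hbff : H.b f f = 2 * H.q0 ⟨f, hf⟩ := by
        rw [H.b_polar ⟨f, hf⟩ ⟨f, hf⟩, polar_self, nsmul_eq_mul]
        norm_num
      have hsq : H.q0 ⟨f, hf⟩ * H.q0 ⟨f, hf⟩ = H.q0 ⟨f, hf⟩ := by
        have h : H.q0 ⟨mul f f, H.mul_ee f hf f hf⟩ = H.q0 ⟨f, hf⟩ * H.q0 ⟨f, hf⟩ :=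
          H.comp_i ⟨f, hf⟩ ⟨f, hf⟩
        rw [show (⟨mul f f, H.mul_ee f hf f hf⟩ : H.even) = ⟨f, hf⟩ from Subtype.ext hif] at h
        exact h.symm
      have hq0 : H.q0 ⟨f, hf⟩ = 0 := by
        rcases mul_eq_zero.mp (show H.q0 ⟨f, hf⟩ * (H.q0 ⟨f, hf⟩ - 1) = 0 by
          linear_combination hsq) with h | h
        · exact h
        · exact absurd (sub_eq_zero.mp h) hq
      have hEf : ∀ z : S, H.b f z = 0 := by
        intro z
        have h : H.b (mul f f) (mul f z) = H.q0 ⟨f, hf⟩ * H.b f z := H.comp_ii₁ ⟨f, hf⟩ f z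
        rw [hif, (hpf z).1] at h
        simp only [_root_.map_sub, _root_.map_smul, smul_eq_mul] at h
        rw [hbff, hq0] at h
        linear_combination -h
      have hf0 : f = 0 := H.q0_reg ⟨f, hf⟩
        (fun y => by rw [← H.b_polar ⟨f, hf⟩ y]; exact hEf y) hq0
      intro x
      have h := (hpf x).1
      rw [hf0] at h
      simpa using h.symm
    have hq1 : H.q0 ⟨e, he⟩ = 1 := (hDich e he hidem hpu).resolve_right hnt
    have hq1' : H.q0 ⟨e', he'⟩ = 1 := (hDich e' he' hidem' hpu').resolve_right hnt
    have hbe'e : H.b e' e = H.b e e' := (hBsym e' he' e).symm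
    have hkey : (H.b e e' + 1) • e = (H.b e e' + 1) • e' := by
      have h1 : mul e e' = H.b e e' • e - e' := (hpu e').1
      have h2 : mul e e' = H.b e' e • e' - e := (hpu' e).2
      rw [hbe'e] at h2
      have h3 := h1.symm.trans h2
      rw [add_smul, add_smul, one_smul, one_smul]
      linear_combination (norm := module) h3
    by_cases hβ1 : H.b e e' + 1 = 0
    · -- β = -1 : derive that this contradicts dim ≥ 3 (or forces e' = e in char 3)
      have hβval : H.b e e' = -1 := eq_neg_of_add_eq_zero_left hβ1
      have hStar : ∀ y ∈ H.even, ∀ t ∈ H.even, (3:F) * H.b y t =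
          2 * H.b e y * H.b e t + H.b e y * H.b e' t + H.b e' y * H.b e t
            + 2 * H.b e' y * H.b e' t := by
        intro y hy t ht
        have h := H.comp_iii 0 0 0 0 e y e' t (Or.inl ⟨rfl, he⟩) (Or.inl ⟨rfl, hy⟩)
          (Or.inl ⟨rfl, he'⟩) (Or.inl ⟨rfl, ht⟩)
        norm_num [sgn2] at h
        rw [(hpu y).1, (hpu' t).1, (hpu' y).1, (hpu t).1] at h
        simp only [_root_.map_sub, _root_.map_smul, LinearMap.sub_apply,
          LinearMap.smul_apply, smul_eq_mul] at h
        rw [hBsym e he y, hBsym e' he' y, hbe'e, hβval] at h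
        linear_combination h
      have hueven : e - e' ∈ H.even := sub_mem he he'
      have hq0u3 : H.q0 ⟨e - e', hueven⟩ = 3 := by
        have heq : (⟨e - e', hueven⟩ : H.even) = ⟨e, he⟩ - ⟨e', he'⟩ := rfl
        rw [heq, sub_eq_add_neg, QuadraticMap.map_add (⇑H.q0), QuadraticMap.map_neg,
          polar_neg_right, ← H.b_polar ⟨e, he⟩ ⟨e', he'⟩]
        show H.q0 ⟨e, he⟩ + H.q0 ⟨e', he'⟩ + -(H.b e e') = 3
        rw [hq1, hq1', hβval]
        norm_num
      by_cases h3 : (3:F) = 0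
      · -- characteristic 3: e - e' is in the radical and isotropic
        have hrad : ∀ t ∈ H.even, H.b (e - e') t = 0 := by
          intro t ht
          have h := hStar t ht t ht
          rw [h3, zero_mul] at h
          have h2 : (H.b e t - H.b e' t) * (H.b e t - H.b e' t) = 0 := by
            linear_combination h + (H.b e t * H.b e t + H.b e' t * H.b e' t) * h3
          simp only [_root_.map_sub, LinearMap.sub_apply]
          exact sub_eq_zero.mp (mul_self_eq_zero.mp h2) ▸ sub_self _
        have hu0 : e - e' = 0 := H.q0_reg ⟨e - e', hueven⟩
          (fun y => by rw [← H.b_polar ⟨e - e', hueven⟩ y]; exact hrad y y.2)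
          (by rw [hq0u3]; exact h3)
        exact (sub_eq_zero.mp hu0).symm
      · -- characteristic ≠ 3 : contradiction with dim ≥ 3
        exfalso
        have hfin : FiniteDimensional F S := Module.finite_of_finrank_pos (by omega)
        obtain ⟨w, hw0, hwe, hwe'⟩ : ∃ w : S, w ≠ 0 ∧ H.b e w = 0 ∧ H.b e' w = 0 := by
          set Φ := (H.b e).prod (H.b e') with hΦ
          have h1 : Module.finrank F (LinearMap.range Φ) ≤ 2 := by
            refine le_trans (Submodule.finrank_le _) ?_
            simp [Module.finrank_prod]
          have h2 := LinearMap.finrank_range_add_finrank_ker Φ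
          have h4 : LinearMap.ker Φ ≠ ⊥ := by
            intro hbot
            rw [hbot, finrank_bot] at h2
            omega
          obtain ⟨w, hwmem, hw0⟩ := Submodule.exists_mem_ne_zero_of_ne_bot h4
          rw [LinearMap.mem_ker, LinearMap.prod_apply] at hwmem
          exact ⟨w, hw0, (Prod.ext_iff.mp hwmem).1, (Prod.ext_iff.mp hwmem).2⟩
        -- the odd component of w vanishes
        have hmulv : ∀ v' ∈ H.odd, mul (e - e') v' = 0 := by
          intro v' hv'
          have h1 := (hpu v').1
          have h2 := (hpu' v').1
          rw [(H.b_eo e he v' hv').1] at h1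
          rw [(H.b_eo e' he' v' hv').1] at h2
          simp only [zero_smul, zero_sub] at h1 h2
          simp only [_root_.map_sub, LinearMap.sub_apply, h1, h2, sub_self]
        have hw : w ∈ H.even ⊔ H.odd := by rw [H.compl.codisjoint.eq_top]; trivial
        rcases Submodule.mem_sup.mp hw with ⟨u, hu, v, hv, huv⟩
        have hv0 : v = 0 := by
          apply H.b_odd_nondeg v hv
          intro v' hv'
          have h : H.b (mul (e - e') v) (mul (e - e') v')
              = H.q0 ⟨e - e', hueven⟩ * H.b v v' := H.comp_ii₁ ⟨e - e', hueven⟩ v v'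
          rw [hmulv v hv, hmulv v' hv', hq0u3] at h
          simp only [map_zero, LinearMap.zero_apply] at h
          rcases mul_eq_zero.mp h.symm with h' | h'
          · exact absurd h' h3
          · exact h'
        have hwE : w ∈ H.even := by
          rw [hv0, add_zero] at huv
          exact huv ▸ hu
        -- w is orthogonal to the whole even part
        have hwt : ∀ t ∈ H.even, H.b w t = 0 := by
          intro t ht
          have h := hStar w hwE t ht
          rw [hwe, hwe'] at h
          simp only [mul_zero, zero_mul, add_zero, zero_add] at h
          rcases mul_eq_zero.mp h with h' | h'
          · exact absurd h' h3
          · exact h'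
        -- and isotropic
        have hq0w : H.q0 ⟨w, hwE⟩ = 0 := by
          have h : H.b (mul w e) (mul w e') = H.q0 ⟨w, hwE⟩ * H.b e e' :=
            H.comp_ii₁ ⟨w, hwE⟩ e e'
          rw [(hpu w).2, (hpu' w).2, hwe, hwe', hβval] at h
          simp only [zero_smul, zero_sub, _root_.map_neg, LinearMap.neg_apply, neg_neg] at h
          rw [hwt w hwE] at h
          linear_combination h
        exact hw0 (H.q0_reg ⟨w, hwE⟩
          (fun y => by rw [← H.b_polar ⟨w, hwE⟩ y]; exact hwt y y.2) hq0w)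

    · exact smul_right_injective S hβ1 hkey.symm
end

section
/- Let (C,·,q) be a Hurwitz superalgebra with C₁ ≠ 0 over a field F of characteristic 2, and let (C,*,q) be the associated para-Hurwitz superalgebra with x*y := x̄·ȳ. Then a decomposition C = ⊕_{g∈G} Cᵍ compatible with the main ℤ₂-grading is a group grading of (C,·) if and only if it is a group grading of (C,*). -/
open QuadraticMap

/-!
Conjugation `x̄ = b(x,1)1 - x` is an involution fixing `1`, so `x * y = x̄ ȳ` and
`x y = x̄ * ȳ`. Hence it suffices to show that, for either product, a grading puts `1` in the
neutral component and kills `b(·,1)` on every `Cᵍ` with `g ≠ 1`: then conjugation preserves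
each `Cᵍ`.

For `(C,·)` this is the usual argument for unital algebras together with the degree-`g`
component of the Cayley–Hamilton equation `x² = b(x,1)x - q(x)1`. For `(C,*)`, the identity
`1 * x = x̄` shows that for `x ∈ Cʰ` the degree-`kh` component of `x̄` is `1ₖ * x`, where `1ₖ`
is the degree-`k` component of `1`. For odd `x` this says that `1̄ₖ` annihilates `C₁` when
`k ≠ 1`; multiplicativity of the norm and nondegeneracy of `b` on `C₁` then force
`b(1ₖ,1) = 0`, and in characteristic 2 also `b(1₁,1) = b(1,1) = 0`. So `1̄ₖ = -1ₖ` for all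
`k`, whence `1ₖ 1ₘ = 0` for `k ≠ 1` and `1 ∈ C¹`. Finally `x * 1 = x̄` gives
`b(x,1)1 ∈ Cᵍ ∩ C¹ = 0` for `x ∈ Cᵍ`, `g ≠ 1`.
-/

open DirectSum

section Grading

variable {F S G : Type*} [Field F] [AddCommGroup S] [Module F S]

def IsGradedBy [Mul G] (γ : G → Submodule F S) (P : S →ₗ[F] S →ₗ[F] S) : Prop :=
  ∀ g h : G, ∀ x ∈ γ g, ∀ y ∈ γ h, P x y ∈ γ (g * h)

theorem IsGradedBy.compl₁₂ [Mul G] {γ : G → Submodule F S} {P : S →ₗ[F] S →ₗ[F] S}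
    (hP : IsGradedBy γ P) {f : S →ₗ[F] S} (hf : ∀ g, ∀ x ∈ γ g, f x ∈ γ g) :
    IsGradedBy γ (P.compl₁₂ f f) :=
  fun g h x hx y hy => hP g h _ (hf g x hx) _ (hf h y hy)

variable [DecidableEq G] (γ : G → Submodule F S) [Decomposition γ]

def gradedComponent (j : G) : S →ₗ[F] S :=
  (γ j).subtype ∘ₗ component F G (fun i => γ i) j ∘ₗ (decomposeLinearEquiv γ).toLinearMap

variable {γ}

theorem gradedComponent_apply (j : G) (x : S) : gradedComponent γ j x = decompose γ x j := rfl

theorem gradedComponent_mem (j : G) (x : S) : gradedComponent γ j x ∈ γ j :=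
  (decompose γ x j).2

theorem gradedComponent_of_mem_same {j : G} {x : S} (hx : x ∈ γ j) :
    gradedComponent γ j x = x :=
  decompose_of_mem_same γ hx

theorem gradedComponent_of_mem_ne {i j : G} {x : S} (hx : x ∈ γ i) (hij : i ≠ j) :
    gradedComponent γ j x = 0 :=
  decompose_of_mem_ne γ hx hij

theorem sum_gradedComponent [∀ i (x : γ i), Decidable (x ≠ 0)] (x : S) :
    ∑ j ∈ (decompose γ x).support, gradedComponent γ j x = x :=
  sum_support_decompose γ x

theorem gradedComponent_map {f : S →ₗ[F] S} (hf : ∀ i, ∀ x ∈ γ i, f x ∈ γ i) (j : G) (x : S) :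
    gradedComponent γ j (f x) = f (gradedComponent γ j x) := by
  induction x using Decomposition.inductionOn γ with
  | zero => simp
  | @homogeneous i m =>
    by_cases hij : i = j
    · subst hij
      rw [gradedComponent_of_mem_same (hf i m m.2), gradedComponent_of_mem_same m.2]
    · rw [gradedComponent_of_mem_ne (hf i m m.2) hij, gradedComponent_of_mem_ne m.2 hij, map_zero]
  | add x y hx hy => simp only [map_add, hx, hy]

/-- The projection onto `B` along `A` preserves every `γ g`, hence commutes with the
homogeneous components. -/
theorem isHomogeneous_of_eq_sup_inf {A B : Submodule F S} (hAB : IsCompl A B)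
    (hγ : ∀ g, γ g = γ g ⊓ A ⊔ γ g ⊓ B) : SetLike.IsHomogeneous γ B := by
  have hproj : ∀ g, ∀ x ∈ γ g, B.projection A hAB.symm x ∈ γ g := by
    intro g x hx
    rw [hγ g] at hx
    obtain ⟨a, ha, b, hb, rfl⟩ := Submodule.mem_sup.mp hx
    rw [map_add, Submodule.projection_apply_of_mem_right hAB.symm ha.2,
      Submodule.projection_apply_of_mem_left hAB.symm hb.2, zero_add]
    exact hb.1
  intro j x hx
  have h := gradedComponent_map hproj j x
  rw [Submodule.projection_apply_of_mem_left hAB.symm hx] at h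
  change gradedComponent γ j x ∈ B
  rw [h]
  exact Submodule.projection_apply_mem _ _

theorem SetLike.IsHomogeneous.map_eq_zero {p : Submodule F S} (hp : SetLike.IsHomogeneous γ p)
    {N : Type*} [AddCommGroup N] [Module F N] (f : S →ₗ[F] N)
    (hf : ∀ i, ∀ x ∈ γ i, x ∈ p → f x = 0) {x : S} (hx : x ∈ p) : f x = 0 := by
  classical
  rw [← sum_gradedComponent (γ := γ) x, map_sum]
  exact Finset.sum_eq_zero fun i _ => hf i _ (gradedComponent_mem i x) (hp i hx)

variable [Group G]

theorem IsGradedBy.gradedComponent_mul_left {P : S →ₗ[F] S →ₗ[F] S} (hP : IsGradedBy γ P)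
    (e : S) {h : G} {x : S} (hx : x ∈ γ h) (k : G) :
    gradedComponent γ (k * h) (P e x) = P (gradedComponent γ k e) x := by
  induction e using Decomposition.inductionOn γ with
  | zero => simp
  | @homogeneous i m =>
    by_cases hik : i = k
    · subst hik
      rw [gradedComponent_of_mem_same (hP _ _ _ m.2 _ hx), gradedComponent_of_mem_same m.2]
    · rw [gradedComponent_of_mem_ne (hP _ _ _ m.2 _ hx) (mt mul_right_cancel hik),
        gradedComponent_of_mem_ne m.2 hik, map_zero, LinearMap.zero_apply]
  | add e e' he he' => simp only [map_add, LinearMap.add_apply, he, he']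

theorem one_mem_of_mul_gradedComponent_eq_zero {P : S →ₗ[F] S →ₗ[F] S} {one : S}
    (hone : ∀ x, P x one = x)
    (h : ∀ k ≠ 1, ∀ m, P (gradedComponent γ k one) (gradedComponent γ m one) = 0) :
    one ∈ γ 1 := by
  classical
  have hcomp : ∀ k ≠ 1, gradedComponent γ k one = 0 := by
    intro k hk
    calc gradedComponent γ k one
        = P (gradedComponent γ k one)
            (∑ m ∈ (decompose γ one).support, gradedComponent γ m one) := by
          rw [sum_gradedComponent, hone]
      _ = 0 := by
          rw [map_sum]
          exact Finset.sum_eq_zero fun m _ => h k hk m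
  rw [← sum_gradedComponent (γ := γ) one]
  refine Submodule.sum_mem _ fun m _ => ?_
  by_cases hm : m = 1
  · exact hm ▸ gradedComponent_mem m one
  · rw [hcomp m hm]
    exact zero_mem _

theorem IsGradedBy.one_mem {P : S →ₗ[F] S →ₗ[F] S} (hP : IsGradedBy γ P) {one : S}
    (hone_left : ∀ x, P one x = x) (hone_right : ∀ x, P x one = x) : one ∈ γ 1 :=
  one_mem_of_mul_gradedComponent_eq_zero hone_right fun k hk m => by
    rw [← hP.gradedComponent_mul_left one (gradedComponent_mem m one) k, hone_left,
      gradedComponent_of_mem_ne (gradedComponent_mem m one) fun h => hk (mul_eq_right.mp h.symm)]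

end Grading

namespace HurwitzSuperOn

variable {F S : Type*} [Field F] [AddCommGroup S] [Module F S] {mul : S →ₗ[F] S →ₗ[F] S}
  (H : HurwitzSuperOn F S mul)

def oneEven : H.even := ⟨H.one, H.one_even⟩

theorem b_comm_of_mem_even (x y : H.even) : H.b x y = H.b y x :=
  (H.b_polar x y).trans ((polar_comm _ _ _).trans (H.b_polar y x).symm)

theorem b_one_of_mem_odd {z : S} (hz : z ∈ H.odd) : H.b z H.one = 0 :=
  (H.b_eo H.one H.one_even z hz).2

theorem one_ne_zero (hodd : H.odd ≠ ⊥) : H.one ≠ 0 := by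
  obtain ⟨z, -, hz⟩ := Submodule.exists_mem_ne_zero_of_ne_bot hodd
  intro h
  exact hz (by simpa [h] using (H.one_mul z).symm)

theorem q0_oneEven (hodd : H.odd ≠ ⊥) : H.q0 H.oneEven = 1 := by
  have hmul : ∀ y : H.even, H.q0 y = H.q0 H.oneEven * H.q0 y := fun y => by
    rw [← H.comp_i]
    exact congrArg H.q0 (Subtype.ext (H.one_mul y).symm)
  by_contra hne
  have hzero : ∀ y : H.even, H.q0 y = 0 := fun y =>
    (mul_eq_zero.mp (by linear_combination hmul y : H.q0 y * (1 - H.q0 H.oneEven) = 0)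
      ).resolve_right (sub_ne_zero.mpr (Ne.symm hne))
  exact H.one_ne_zero hodd (H.q0_reg H.oneEven (fun y => by simp [polar, hzero]) (hzero _))

theorem b_one_one (hodd : H.odd ≠ ⊥) : H.b H.one H.one = 2 := by
  rw [show H.b H.one H.one = polar H.q0 H.oneEven H.oneEven from
    H.b_polar H.oneEven H.oneEven, polar_self, H.q0_oneEven hodd, two_smul, one_add_one_eq_two]

theorem exists_b_ne_zero (hodd : H.odd ≠ ⊥) : ∃ z ∈ H.odd, ∃ y ∈ H.odd, H.b z y ≠ 0 := by
  obtain ⟨z, hz, hz0⟩ := Submodule.exists_mem_ne_zero_of_ne_bot hodd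
  by_contra! h
  exact hz0 (H.b_odd_nondeg z hz (h z hz))

theorem q0_add_smul_oneEven (hodd : H.odd ≠ ⊥) (x : H.even) (a : F) :
    H.q0 (x + a • H.oneEven) = H.q0 x + a * H.b x H.one + a ^ 2 := by
  rw [QuadraticMap.map_add H.q0, QuadraticMap.map_smul, polar_smul_right, H.q0_oneEven hodd,
    ← H.b_polar]
  simp only [smul_eq_mul, oneEven]
  ring

theorem q0_eq_sq_of_forall_mul_odd (hodd : H.odd ≠ ⊥) (x : H.even) (a : F)
    (hx : ∀ z ∈ H.odd, mul x z = a • z) : H.q0 x = a ^ 2 := by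
  obtain ⟨z, hz, y, hy, hzy⟩ := H.exists_b_ne_zero hodd
  have h := H.comp_ii₁ x z y
  simp only [hx z hz, hx y hy, map_smul, LinearMap.smul_apply, smul_eq_mul] at h
  exact mul_right_cancel₀ hzy (by linear_combination -h)

theorem b_mul_self_left (x z : H.even) :
    H.b (mul x x) z = H.b x z * H.b x H.one - H.q0 x * H.b z H.one := by
  have h := H.comp_iii 0 0 0 0 x x z H.one (Or.inl ⟨rfl, x.2⟩) (Or.inl ⟨rfl, x.2⟩)
    (Or.inl ⟨rfl, z.2⟩) (Or.inl ⟨rfl, H.one_even⟩)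
  have h' := H.comp_ii₂ x z H.one
  simp only [mul_zero, add_zero, sgn2, if_true, _root_.one_mul, H.mul_one, H.one_mul] at h h'
  linear_combination h - h'

/-- Cayley–Hamilton: `d = x² - b(x,1)x + q(x)1` lies in the radical of `q0` and `q0 d = 0`,
so `d = 0` by regularity. -/
theorem mul_self_eq (hodd : H.odd ≠ ⊥) (x : H.even) :
    mul x x = H.b x H.one • (x : S) - H.q0 x • H.one := by
  set a := H.b x H.one
  set α := H.q0 x
  let u : H.even := ⟨mul x x, H.mul_ee x x.2 x x.2⟩
  let w : H.even := a • x + (-α) • H.oneEven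
  have hpolar : ∀ y : H.even, polar H.q0 (u - w) y = 0 := by
    intro y
    rw [← H.b_polar]
    simp only [u, w, Submodule.coe_sub, Submodule.coe_add, Submodule.coe_smul, map_sub, map_add,
      map_smul, LinearMap.sub_apply, LinearMap.add_apply, LinearMap.smul_apply, smul_eq_mul,
      H.b_mul_self_left, oneEven]
    rw [show H.b H.one y = H.b y H.one from H.b_comm_of_mem_even H.oneEven y]
    ring
  have hq0w : H.q0 w = α ^ 2 := by
    rw [H.q0_add_smul_oneEven hodd, QuadraticMap.map_smul, Submodule.coe_smul, map_smul,
      LinearMap.smul_apply, smul_eq_mul, smul_eq_mul]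
    ring
  have hq0u : H.q0 u = α ^ 2 := (H.comp_i x x).trans (sq α).symm
  have hq0d : H.q0 (u - w) = 0 := by
    have h := QuadraticMap.map_add H.q0 (u - w) w
    rw [sub_add_cancel, hpolar, hq0u, hq0w] at h
    linear_combination -h
  have hd := H.q0_reg _ hpolar hq0d
  simp only [u, w, Submodule.coe_sub, Submodule.coe_add, Submodule.coe_smul, oneEven] at hd
  rw [sub_eq_zero.mp hd, neg_smul, ← sub_eq_add_neg]

def conj : S →ₗ[F] S := (H.b.flip H.one).smulRight H.one - LinearMap.id

theorem conj_apply (x : S) : H.conj x = H.b x H.one • H.one - x := rfl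

theorem conj_eq_neg {x : S} (hx : H.b x H.one = 0) : H.conj x = -x := by
  rw [conj_apply, hx, zero_smul, zero_sub]

theorem conj_mem_even {x : S} (hx : x ∈ H.even) : H.conj x ∈ H.even :=
  sub_mem (Submodule.smul_mem _ _ H.one_even) hx

theorem conj_one (hodd : H.odd ≠ ⊥) : H.conj H.one = H.one := by
  rw [conj_apply, H.b_one_one hodd, two_smul, add_sub_cancel_right]

theorem conj_conj (hodd : H.odd ≠ ⊥) (x : S) : H.conj (H.conj x) = x := by
  simp only [conj_apply, map_sub, map_smul, H.b_one_one hodd]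
  module

theorem q0_conj (hodd : H.odd ≠ ⊥) (x : H.even) :
    H.q0 ⟨H.conj x, H.conj_mem_even x.2⟩ = H.q0 x := by
  have h : (⟨H.conj x, H.conj_mem_even x.2⟩ : H.even) = -(x + (-H.b x H.one) • H.oneEven) := by
    ext
    simp [conj_apply, oneEven, sub_eq_add_neg]
  rw [h, QuadraticMap.map_neg, H.q0_add_smul_oneEven hodd]
  ring

theorem b_one_eq_zero_of_forall_conj_mul_odd (hodd : H.odd ≠ ⊥) (x : H.even)
    (hx : ∀ z ∈ H.odd, mul (H.conj x) z = 0) : H.b x H.one = 0 := by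
  have hq0 : H.q0 x = H.b x H.one ^ 2 := H.q0_eq_sq_of_forall_mul_odd hodd x _ fun z hz => by
    have h := hx z hz
    rwa [conj_apply, map_sub, map_smul, LinearMap.sub_apply, LinearMap.smul_apply, H.one_mul,
      sub_eq_zero, eq_comm] at h
  have hq0' := H.q0_eq_sq_of_forall_mul_odd hodd ⟨_, H.conj_mem_even x.2⟩ 0 fun z hz => by
    rw [zero_smul]; exact hx z hz
  rw [H.q0_conj hodd, hq0] at hq0'
  exact pow_eq_zero_iff two_ne_zero |>.mp (hq0'.trans (zero_pow two_ne_zero))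

def paraMul : S →ₗ[F] S →ₗ[F] S := mul.compl₁₂ H.conj H.conj

theorem paraMul_apply (x y : S) : H.paraMul x y = mul (H.conj x) (H.conj y) := rfl

theorem paraMul_one_left (hodd : H.odd ≠ ⊥) (x : S) : H.paraMul H.one x = H.conj x := by
  rw [paraMul_apply, H.conj_one hodd, H.one_mul]

theorem paraMul_one_right (hodd : H.odd ≠ ⊥) (x : S) : H.paraMul x H.one = H.conj x := by
  rw [paraMul_apply, H.conj_one hodd, H.mul_one]

theorem compl₁₂_conj_paraMul (hodd : H.odd ≠ ⊥) : H.paraMul.compl₁₂ H.conj H.conj = mul := by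
  ext x y
  simp only [LinearMap.compl₁₂_apply, paraMul_apply, H.conj_conj hodd]

variable {G : Type*} [Group G] {γ : G → Submodule F S}

theorem conj_mem (h1 : H.one ∈ γ 1) (hb : ∀ h ≠ 1, ∀ x ∈ γ h, H.b x H.one = 0) (g : G) (x : S)
    (hx : x ∈ γ g) : H.conj x ∈ γ g := by
  by_cases hg : g = 1
  · subst hg
    exact sub_mem (Submodule.smul_mem _ _ h1) hx
  · rw [H.conj_eq_neg (hb g hg x hx)]
    exact neg_mem hx

variable [DecidableEq G] [Decomposition γ]

theorem b_one_eq_zero_of_isGradedBy_mul_of_mem_even (hodd : H.odd ≠ ⊥)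
    (hmul : IsGradedBy γ mul) (h1 : H.one ∈ γ 1) {h : G} (hh : h ≠ 1) (x : H.even)
    (hx : (x : S) ∈ γ h) : H.b x H.one = 0 := by
  have hcomp := congrArg (gradedComponent γ h) (H.mul_self_eq hodd x)
  rw [gradedComponent_of_mem_ne (hmul h h _ hx _ hx) fun e => hh (mul_eq_right.mp e),
    map_sub, map_smul, map_smul, gradedComponent_of_mem_same hx,
    gradedComponent_of_mem_ne h1 (Ne.symm hh), smul_zero, sub_zero] at hcomp
  rcases smul_eq_zero.mp hcomp.symm with hb | hx0
  · exact hb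
  · rw [hx0, map_zero, LinearMap.zero_apply]

theorem b_one_eq_zero_of_isGradedBy_mul (hodd : H.odd ≠ ⊥)
    (hsuper : ∀ g, γ g = γ g ⊓ H.even ⊔ γ g ⊓ H.odd) (hmul : IsGradedBy γ mul)
    (h1 : H.one ∈ γ 1) (h : G) (hh : h ≠ 1) (x : S) (hx : x ∈ γ h) : H.b x H.one = 0 := by
  rw [hsuper h] at hx
  obtain ⟨xe, hxe, xo, hxo, rfl⟩ := Submodule.mem_sup.mp hx
  rw [map_add, LinearMap.add_apply, H.b_one_of_mem_odd hxo.2, add_zero]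
  exact H.b_one_eq_zero_of_isGradedBy_mul_of_mem_even hodd hmul h1 hh ⟨xe, hxe.2⟩ hxe.1

theorem gradedComponent_conj_of_isGradedBy_paraMul (hodd : H.odd ≠ ⊥)
    (hpara : IsGradedBy γ H.paraMul) {h : G} {x : S} (hx : x ∈ γ h) (k : G) :
    gradedComponent γ (k * h) (H.conj x) = H.paraMul (gradedComponent γ k H.one) x := by
  rw [← H.paraMul_one_left hodd]
  exact hpara.gradedComponent_mul_left _ hx k

theorem b_gradedComponent_one_eq_zero_of_ne_one (hodd : H.odd ≠ ⊥)
    (hsuper : ∀ g, γ g = γ g ⊓ H.even ⊔ γ g ⊓ H.odd) (hpara : IsGradedBy γ H.paraMul) {k : G}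
    (hk : k ≠ 1) : H.b (gradedComponent γ k H.one) H.one = 0 := by
  have hev := isHomogeneous_of_eq_sup_inf H.compl.symm fun g => (hsuper g).trans (sup_comm _ _)
  refine H.b_one_eq_zero_of_forall_conj_mul_odd hodd ⟨_, hev k H.one_even⟩ fun z hz =>
    SetLike.IsHomogeneous.map_eq_zero (isHomogeneous_of_eq_sup_inf H.compl hsuper) _
      (fun a z hza hzo => ?_) hz
  have h := H.gradedComponent_conj_of_isGradedBy_paraMul hodd hpara hza k
  simp only [paraMul_apply, H.conj_eq_neg (H.b_one_of_mem_odd hzo), map_neg,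
    gradedComponent_of_mem_ne hza fun e => hk (mul_eq_right.mp e.symm), neg_zero] at h
  exact neg_eq_zero.mp h.symm

theorem b_gradedComponent_one_eq_zero [CharP F 2] (hodd : H.odd ≠ ⊥)
    (hsuper : ∀ g, γ g = γ g ⊓ H.even ⊔ γ g ⊓ H.odd) (hpara : IsGradedBy γ H.paraMul) (m : G) :
    H.b (gradedComponent γ m H.one) H.one = 0 := by
  classical
  by_cases hm : m = 1
  · subst hm
    have h := congrArg (H.b · H.one) (sum_gradedComponent (γ := γ) H.one)
    simp only [map_sum, LinearMap.sum_apply, H.b_one_one hodd, CharTwo.two_eq_zero] at h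
    rwa [Finset.sum_eq_single 1
      (fun k _ hk => H.b_gradedComponent_one_eq_zero_of_ne_one hodd hsuper hpara hk)
      fun h1 => by rw [gradedComponent_apply, DFinsupp.notMem_support_iff.mp h1]; simp] at h
  · exact H.b_gradedComponent_one_eq_zero_of_ne_one hodd hsuper hpara hm

theorem one_mem_of_isGradedBy_paraMul [CharP F 2] (hodd : H.odd ≠ ⊥)
    (hsuper : ∀ g, γ g = γ g ⊓ H.even ⊔ γ g ⊓ H.odd) (hpara : IsGradedBy γ H.paraMul) :
    H.one ∈ γ 1 := by
  refine one_mem_of_mul_gradedComponent_eq_zero H.mul_one fun k hk m => ?_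
  have hc : ∀ j, H.conj (gradedComponent γ j H.one) = -gradedComponent γ j H.one := fun j =>
    H.conj_eq_neg (H.b_gradedComponent_one_eq_zero hodd hsuper hpara j)
  have h :=
    H.gradedComponent_conj_of_isGradedBy_paraMul hodd hpara (gradedComponent_mem m H.one) k
  simp only [paraMul_apply, hc, map_neg, LinearMap.neg_apply, neg_neg,
    gradedComponent_of_mem_ne (gradedComponent_mem m H.one) fun e => hk (mul_eq_right.mp e.symm),
    neg_zero] at h
  exact h.symm

theorem b_one_eq_zero_of_isGradedBy_paraMul (hodd : H.odd ≠ ⊥) (hpara : IsGradedBy γ H.paraMul)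
    (h1 : H.one ∈ γ 1) (h : G) (hh : h ≠ 1) (x : S) (hx : x ∈ γ h) : H.b x H.one = 0 := by
  have hconj : H.conj x ∈ γ h := by
    simpa only [H.paraMul_one_right hodd, _root_.mul_one] using hpara h 1 x hx _ h1
  have hb : H.b x H.one • H.one ∈ γ h := by
    simpa only [conj_apply, sub_add_cancel] using add_mem hconj hx
  by_contra hne
  exact hh (degree_eq_of_mem_mem γ hb (Submodule.smul_mem _ _ h1)
    (smul_ne_zero hne (H.one_ne_zero hodd)))

end HurwitzSuperOn

/-- for a Hurwitz superalgebra `(C,·)` with nonzero odd part in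
characteristic 2, a decomposition compatible with the main `ℤ₂`-grading is a group grading
of `(C,·)` iff it is a group grading of the para-Hurwitz superalgebra `(C,*)`,
where `x*y = x̄·ȳ` and `x̄ = b(x,1)1 − x`. -/
theorem paraHurwitz_gradings_coincide {F S G : Type*} [Field F] [AddCommGroup S]
    [Module F S] [Group G] [DecidableEq G]
    (hchar : ringChar F = 2)
    (mul : S →ₗ[F] S →ₗ[F] S) (H : HurwitzSuperOn F S mul)
    (hodd : H.odd ≠ ⊥)
    (γ : G → Submodule F S) (hint : DirectSum.IsInternal γ)
    (hsuper : ∀ g : G, γ g = (γ g ⊓ H.even) ⊔ (γ g ⊓ H.odd)) :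
    (∀ g h : G, ∀ x ∈ γ g, ∀ y ∈ γ h, mul x y ∈ γ (g * h)) ↔
    (∀ g h : G, ∀ x ∈ γ g, ∀ y ∈ γ h,
      mul (H.b x H.one • H.one - x) (H.b y H.one • H.one - y) ∈ γ (g * h)) := by
  let := hint.chooseDecomposition
  have : CharP F 2 := ringChar.of_eq hchar
  change IsGradedBy γ mul ↔ IsGradedBy γ H.paraMul
  constructor
  · intro hmul
    have h1 := hmul.one_mem H.one_mul H.mul_one
    exact hmul.compl₁₂ (H.conj_mem h1 (H.b_one_eq_zero_of_isGradedBy_mul hodd hsuper hmul h1))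
  · intro hpara
    have h1 := H.one_mem_of_isGradedBy_paraMul hodd hsuper hpara
    rw [← H.compl₁₂_conj_paraMul hodd]
    exact hpara.compl₁₂ (H.conj_mem h1 (H.b_one_eq_zero_of_isGradedBy_paraMul hodd hpara h1))
end

section
/- Let S = B(1,2) with the twisted product x*y := φ(x̄)·φ²(ȳ), where φ is the automorphism of B(1,2) given by φ(u) = u, φ(v) = λu + v, φ(1) = 1, with λ ≠ 0, denoted S = B̄(1,2)_λ. Then the only nontrivial group grading on the superalgebra S, up to equivalence, is the main ℤ₂-grading. -/
/-!
The even part `F1` is spanned by the unit, so it is an atom and lies in a single component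
`γ g₀`. On `V`, in coordinates `x = a u + c v`, the twisted product is
`x * y = (a c' - a' c - λ c c') 1`. For a homogeneous `x ∈ γ g ∩ V` with `c ≠ 0`, the square
`x * x = -λ c² 1` is nonzero, so `g² = g₀`; for any other nonzero homogeneous `y ∈ γ h ∩ V`
one of `x * y`, `y * x` is nonzero (their sum is `-2λ c c'`), so `g h = g₀` or `h g = g₀`,
forcing `h = g`. Two nonzero homogeneous elements of `V` with `c = 0` are both multiples of
`u`. Hence `V` also lies in a single component, different from `g₀` since the grading is
nontrivial.
-/

section Lattice

variable {α ι : Type*}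

theorem exists_eq_and_eq_bot_of_iSup_eq [CompleteLattice α] {f : ι → α} {a : α}
    (hsup : ⨆ i, f i = a) (ha : a ≠ ⊥) (hf : ∀ i j, i ≠ j → f i = ⊥ ∨ f j = ⊥) :
    ∃ i, f i = a ∧ ∀ j, j ≠ i → f j = ⊥ := by
  obtain ⟨i, hi⟩ : ∃ i, f i ≠ ⊥ := by
    by_contra! h
    exact ha (by simp [← hsup, h])
  have hbot : ∀ j, j ≠ i → f j = ⊥ := fun j hj => (hf j i hj).resolve_right hi
  refine ⟨i, le_antisymm (hsup ▸ le_iSup f i) ?_, hbot⟩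
  refine hsup ▸ iSup_le fun j => ?_
  by_cases hj : j = i
  · exact hj ▸ le_rfl
  · exact (hbot j hj).symm ▸ bot_le

theorem iSup_inf_eq_of_isCompl [CompleteLattice α] [IsModularLattice α] {L V : α}
    (hLV : IsCompl L V) {γ : ι → α} (htop : ⨆ i, γ i = ⊤)
    (hsplit : ∀ i, γ i = γ i ⊓ L ⊔ γ i ⊓ V) : ⨆ i, γ i ⊓ V = V := by
  set W := ⨆ i, γ i ⊓ V
  have hWV : W ≤ V := iSup_le fun _ => inf_le_right
  have hcover : ⊤ ≤ W ⊔ L := htop ▸ iSup_le fun i =>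
    (hsplit i).le.trans (sup_le (le_sup_of_le_right inf_le_right)
      (le_sup_of_le_left (le_iSup (fun i => γ i ⊓ V) i)))
  calc W = W ⊔ L ⊓ V := by rw [hLV.inf_eq_bot, sup_bot_eq]
    _ = (W ⊔ L) ⊓ V := (sup_inf_assoc_of_le L hWV).symm
    _ = V := by rw [top_le_iff.mp hcover, top_inf_eq]

theorem inf_eq_bot_or_inf_eq_bot_of_isAtom [Lattice α] [OrderBot α] {a : α} (ha : IsAtom a)
    {f : ι → α} (hf : Pairwise (Function.onFun Disjoint f)) (i j : ι) (hij : i ≠ j) :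
    f i ⊓ a = ⊥ ∨ f j ⊓ a = ⊥ := by
  rcases ha.le_iff.mp (inf_le_right : f i ⊓ a ≤ a) with hi | hi
  · exact .inl hi
  rcases ha.le_iff.mp (inf_le_right : f j ⊓ a ≤ a) with hj | hj
  · exact .inr hj
  exact absurd (disjoint_self.mp ((hf hij).mono (inf_eq_right.mp hi) (inf_eq_right.mp hj))) ha.1

theorem eq_of_isCompl_of_inf_eq [CompleteLattice α] {L V : α} (hLV : IsCompl L V)
    {γ : ι → α} (hsplit : ∀ i, γ i = γ i ⊓ L ⊔ γ i ⊓ V) (hnt : ∀ i, γ i ≠ ⊤) {i₀ i₁ : ι}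
    (hL₀ : γ i₀ ⊓ L = L) (hL : ∀ j, j ≠ i₀ → γ j ⊓ L = ⊥)
    (hV₁ : γ i₁ ⊓ V = V) (hV : ∀ j, j ≠ i₁ → γ j ⊓ V = ⊥) :
    i₀ ≠ i₁ ∧ γ i₀ = L ∧ γ i₁ = V ∧ ∀ j, j ≠ i₀ → j ≠ i₁ → γ j = ⊥ := by
  have h01 : i₀ ≠ i₁ := by
    rintro rfl
    refine hnt i₀ (top_le_iff.mp ?_)
    rw [← hLV.sup_eq_top, hsplit i₀, hL₀, hV₁]
  refine ⟨h01, ?_, ?_, fun j hj₀ hj₁ => ?_⟩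
  · rw [hsplit i₀, hL₀, hV i₀ h01, sup_bot_eq]
  · rw [hsplit i₁, hL i₁ h01.symm, hV₁, bot_sup_eq]
  · rw [hsplit j, hL j hj₀, hV j hj₁, sup_bot_eq]

end Lattice

section Coordinates

variable {F S : Type*} [Field F] [AddCommGroup S] [Module F S]

theorem bilin_pair_pair (b : S →ₗ[F] S →ₗ[F] F) {u v : S} (huu : b u u = 0) (hvv : b v v = 0)
    (huv : b u v = 1) (hvu : b v u = -1) (a c a' c' : F) :
    b (a • u + c • v) (a' • u + c' • v) = a * c' - c * a' := by
  simp only [map_add, map_smul, LinearMap.add_apply, LinearMap.smul_apply, huu, hvv, huv, hvu,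
    smul_eq_mul]
  ring

theorem map_pair_of_shear (φ : S →ₗ[F] S) {u v : S} {lam : F} (hφu : φ u = u)
    (hφv : φ v = lam • u + v) (a c : F) :
    φ (a • u + c • v) = (a + lam * c) • u + c • v := by
  rw [map_add, map_smul, map_smul, hφu, hφv, smul_add, smul_smul, add_smul, add_assoc, mul_comm c lam]

/-- The twisted product `φ(x̄)·φ²(ȳ)` in coordinates; `x̄ = b(x,1)1 - x` is `-x` on `V`. -/
theorem twisted_mul_pair_pair (mul : S →ₗ[F] S →ₗ[F] S) (e : S) (V : Submodule F S)
    (b : S →ₗ[F] S →ₗ[F] F) (hmulV : ∀ u' ∈ V, ∀ v' ∈ V, mul u' v' = b u' v' • e)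
    (hbeV : ∀ v' ∈ V, b v' e = 0) {u v : S} (hu : u ∈ V) (hv : v ∈ V)
    (huu : b u u = 0) (hvv : b v v = 0) (huv : b u v = 1) (hvu : b v u = -1)
    {lam : F} (φ : S →ₗ[F] S) (hφu : φ u = u) (hφv : φ v = lam • u + v) (a₁ c₁ a₂ c₂ : F) :
    mul (φ (b (a₁ • u + c₁ • v) e • e - (a₁ • u + c₁ • v)))
        (φ (φ (b (a₂ • u + c₂ • v) e • e - (a₂ • u + c₂ • v)))) =
      (a₁ * c₂ - a₂ * c₁ - lam * c₁ * c₂) • e := by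
  have hpair : ∀ a c : F, a • u + c • v ∈ V := fun a c =>
    V.add_mem (V.smul_mem a hu) (V.smul_mem c hv)
  simp only [hbeV _ (hpair _ _), zero_smul, zero_sub, map_neg, LinearMap.neg_apply, neg_neg,
    map_pair_of_shear φ hφu hφv, hmulV _ (hpair _ _) _ (hpair _ _),
    bilin_pair_pair b huu hvv huv hvu]
  congr 1
  ring

end Coordinates

theorem twisted_coeff_ne_zero_or {F : Type*} [Field F] (h2 : (2 : F) ≠ 0) {lam : F}
    (hlam : lam ≠ 0) {a₁ c₁ a₂ c₂ : F} (hc₁ : c₁ ≠ 0) (h₂ : a₂ ≠ 0 ∨ c₂ ≠ 0) :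
    a₁ * c₂ - a₂ * c₁ - lam * c₁ * c₂ ≠ 0 ∨ a₂ * c₁ - a₁ * c₂ - lam * c₂ * c₁ ≠ 0 := by
  by_contra! h
  have hc₂ : c₂ = 0 := by
    have : 2 * lam * c₁ * c₂ = 0 := by linear_combination -h.1 - h.2
    simpa [h2, hlam, hc₁] using this
  have ha₂ : a₂ = 0 := by
    have : a₂ * c₁ = 0 := by linear_combination -h.1 + (a₁ - lam * c₁) * hc₂
    simpa [hc₁] using this
  exact h₂.elim (· ha₂) (· hc₂)

section Grading

variable {F S G : Type*} [Field F] [AddCommGroup S] [Module F S] [Group G]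
  {γ : G → Submodule F S} {e u v : S} {lam : F} {g₀ : G}

/-- The grading condition for the twisted product on `V = F u ⊕ F v`, which takes values
in `F e`. -/
def HasTwistedProduct (γ : G → Submodule F S) (e u v : S) (lam : F) : Prop :=
  ∀ g h : G, ∀ a₁ c₁ a₂ c₂ : F, a₁ • u + c₁ • v ∈ γ g → a₂ • u + c₂ • v ∈ γ h →
    (a₁ * c₂ - a₂ * c₁ - lam * c₁ * c₂) • e ∈ γ (g * h)

theorem eq_of_twisted_of_coeff_ne_zero (h2 : (2 : F) ≠ 0) (hlam : lam ≠ 0)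
    (htw : HasTwistedProduct γ e u v lam)
    (he : ∀ (c : F) (g : G), c ≠ 0 → c • e ∈ γ g → g = g₀)
    {g h : G} {a₁ c₁ a₂ c₂ : F} (hx : a₁ • u + c₁ • v ∈ γ g) (hy : a₂ • u + c₂ • v ∈ γ h)
    (hc₁ : c₁ ≠ 0) (h₂ : a₂ ≠ 0 ∨ c₂ ≠ 0) : g = h := by
  have hsq : g * g = g₀ := by
    refine he _ _ ?_ (htw g g _ _ _ _ hx hx)
    have : a₁ * c₁ - a₁ * c₁ - lam * c₁ * c₁ = -(lam * c₁ * c₁) := by ring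
    rw [this, neg_ne_zero]
    exact mul_ne_zero (mul_ne_zero hlam hc₁) hc₁
  rcases twisted_coeff_ne_zero_or h2 hlam hc₁ h₂ with hxy | hyx
  · exact mul_left_cancel (hsq.trans (he _ _ hxy (htw g h _ _ _ _ hx hy)).symm)
  · exact (mul_right_cancel ((he _ _ hyx (htw h g _ _ _ _ hy hx)).trans hsq.symm)).symm

theorem inf_eq_bot_or_inf_eq_bot_of_twisted (h2 : (2 : F) ≠ 0) (hlam : lam ≠ 0)
    (htw : HasTwistedProduct γ e u v lam)
    (he : ∀ (c : F) (g : G), c ≠ 0 → c • e ∈ γ g → g = g₀)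
    (hdisj : Pairwise (Function.onFun Disjoint γ)) (hu : u ≠ 0) {V : Submodule F S}
    (hbasis : Submodule.span F {u, v} = V) (g h : G) (hgh : g ≠ h) :
    γ g ⊓ V = ⊥ ∨ γ h ⊓ V = ⊥ := by
  by_contra! hne
  obtain ⟨x, ⟨hxg, hxV⟩, hx⟩ := Submodule.exists_mem_ne_zero_of_ne_bot hne.1
  obtain ⟨y, ⟨hyh, hyV⟩, hy⟩ := Submodule.exists_mem_ne_zero_of_ne_bot hne.2
  obtain ⟨a₁, c₁, rfl⟩ := Submodule.mem_span_pair.mp (hbasis ▸ hxV)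
  obtain ⟨a₂, c₂, rfl⟩ := Submodule.mem_span_pair.mp (hbasis ▸ hyV)
  have hcoord : ∀ a c : F, a • u + c • v ≠ 0 → a ≠ 0 ∨ c ≠ 0 := by
    intro a c hac
    by_contra! h
    exact hac (by simp [h.1, h.2])
  by_cases hc₁ : c₁ = 0
  · by_cases hc₂ : c₂ = 0
    · subst hc₁ hc₂
      simp only [zero_smul, add_zero] at hxg hyh hx hy
      exact hu (Submodule.disjoint_def.mp (hdisj hgh) u
        (((γ g).smul_mem_iff (left_ne_zero_of_smul hx)).mp hxg)
        (((γ h).smul_mem_iff (left_ne_zero_of_smul hy)).mp hyh))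
    · exact hgh (eq_of_twisted_of_coeff_ne_zero h2 hlam htw he hyh hxg hc₂
        (hcoord _ _ hx)).symm
  · exact hgh (eq_of_twisted_of_coeff_ne_zero h2 hlam htw he hxg hyh hc₁ (hcoord _ _ hy))

end Grading

theorem B12lambda_only_main_grading_general {F S G : Type*} [Field F] [AddCommGroup S]
    [Module F S] [Group G] [DecidableEq G]
    (hchar : ringChar F = 3)
    (mul : S →ₗ[F] S →ₗ[F] S) (e : S) (V : Submodule F S) (b : S →ₗ[F] S →ₗ[F] F)
    (he : e ≠ 0)
    (hcompl : IsCompl (Submodule.span F {e}) V)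
    (hmulV : ∀ u' ∈ V, ∀ v' ∈ V, mul u' v' = b u' v' • e)
    (halt : ∀ u' ∈ V, b u' u' = 0)
    (hskew : ∀ u' ∈ V, ∀ v' ∈ V, b u' v' = - b v' u')
    (hbeV : ∀ v' ∈ V, b e v' = 0 ∧ b v' e = 0)
    (u v : S) (hu : u ∈ V) (hv : v ∈ V) (huv : b u v = 1)
    (hbasis : Submodule.span F {u, v} = V)
    (lam : F) (hlam : lam ≠ 0)
    (φ : S →ₗ[F] S)
    (hφu : φ u = u) (hφv : φ v = lam • u + v)
    (γ : G → Submodule F S) (hint : DirectSum.IsInternal γ)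
    (hsuper : ∀ g : G, γ g = (γ g ⊓ Submodule.span F {e}) ⊔ (γ g ⊓ V))
    (hstar : ∀ g h : G, ∀ x ∈ γ g, ∀ y ∈ γ h,
      mul (φ (b x e • e - x)) (φ (φ (b y e • e - y))) ∈ γ (g * h))
    (hnontrivial : ∀ g : G, γ g ≠ ⊤) :
    ∃ g₀ g₁ : G, g₀ ≠ g₁ ∧ γ g₀ = Submodule.span F {e} ∧ γ g₁ = V ∧
      ∀ g : G, g ≠ g₀ → g ≠ g₁ → γ g = ⊥ := by
  have h2 : (2 : F) ≠ 0 := Ring.two_ne_zero (by rw [hchar]; decide)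
  have hdisj := hint.submodule_iSupIndep.pairwiseDisjoint
  have htop := hint.submodule_iSup_eq_top
  obtain ⟨g₀, hL₀, hL⟩ := exists_eq_and_eq_bot_of_iSup_eq
    (iSup_inf_eq_of_isCompl hcompl.symm htop fun g => (hsuper g).trans (sup_comm _ _))
    (nonzero_span_atom e he).1 (inf_eq_bot_or_inf_eq_bot_of_isAtom (nonzero_span_atom e he) hdisj)
  have he₀ : ∀ (c : F) (g : G), c ≠ 0 → c • e ∈ γ g → g = g₀ := by
    intro c g hc hce
    by_contra hg
    have hce0 : c • e = 0 := (Submodule.mem_bot F).mp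
      (hL g hg ▸ ⟨hce, Submodule.smul_mem _ c (Submodule.mem_span_singleton_self e)⟩)
    exact he ((smul_eq_zero.mp hce0).resolve_left hc)
  have hu0 : u ≠ 0 := by
    rintro rfl
    simp at huv
  have htw : HasTwistedProduct γ e u v lam := fun g h a₁ c₁ a₂ c₂ hx hy =>
    twisted_mul_pair_pair mul e V b hmulV (fun v' hv' => (hbeV v' hv').2) hu hv (halt u hu)
      (halt v hv) huv (by rw [hskew v hv u hu, huv]) φ hφu hφv a₁ c₁ a₂ c₂ ▸
      hstar g h _ hx _ hy
  obtain ⟨g₁, hV₁, hV⟩ := exists_eq_and_eq_bot_of_iSup_eq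
    (iSup_inf_eq_of_isCompl hcompl htop hsuper) ((Submodule.ne_bot_iff V).mpr ⟨u, hu, hu0⟩)
    (inf_eq_bot_or_inf_eq_bot_of_twisted h2 hlam htw he₀ hdisj hu0 hbasis)
  exact ⟨g₀, g₁, eq_of_isCompl_of_inf_eq hcompl hsuper hnontrivial hL₀ hL hV₁ hV⟩

/-- for `S = B̄(1,2)_λ` with `λ ≠ 0` (the superalgebra `B(1,2)` with the
twisted product `x*y = φ(x̄)·φ²(ȳ)`, `φ(u) = u`, `φ(v) = λu + v`, `φ(1) = 1`), the only
nontrivial group grading, up to equivalence, is the main `ℤ₂`-grading: the nonzero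
homogeneous components of any nontrivial grading are exactly the even part `F1` and
the odd part `V`. -/
theorem B12lambda_only_main_grading {F S G : Type*} [Field F] [AddCommGroup S]
    [Module F S] [Group G] [DecidableEq G]
    (hchar : ringChar F = 3)
    (mul : S →ₗ[F] S →ₗ[F] S) (e : S) (V : Submodule F S) (b : S →ₗ[F] S →ₗ[F] F)
    (he : e ≠ 0)
    (hcompl : IsCompl (Submodule.span F {e}) V)
    (hV2 : Module.finrank F V = 2)
    (hunit : ∀ x : S, mul e x = x ∧ mul x e = x)
    (hmulV : ∀ u' ∈ V, ∀ v' ∈ V, mul u' v' = b u' v' • e)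
    (halt : ∀ u' ∈ V, b u' u' = 0)
    (hskew : ∀ u' ∈ V, ∀ v' ∈ V, b u' v' = - b v' u')
    (hnd : ∀ u' ∈ V, (∀ v' ∈ V, b u' v' = 0) → u' = 0)
    (hbeV : ∀ v' ∈ V, b e v' = 0 ∧ b v' e = 0)
    (u v : S) (hu : u ∈ V) (hv : v ∈ V) (huv : b u v = 1)
    (hbasis : Submodule.span F {u, v} = V)
    (lam : F) (hlam : lam ≠ 0)
    (φ : S →ₗ[F] S)
    (hφmul : ∀ x y : S, φ (mul x y) = mul (φ x) (φ y))
    (hφe : φ e = e) (hφu : φ u = u) (hφv : φ v = lam • u + v)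
    (γ : G → Submodule F S) (hint : DirectSum.IsInternal γ)
    (hsuper : ∀ g : G, γ g = (γ g ⊓ Submodule.span F {e}) ⊔ (γ g ⊓ V))
    (hstar : ∀ g h : G, ∀ x ∈ γ g, ∀ y ∈ γ h,
      mul (φ (b x e • e - x)) (φ (φ (b y e • e - y))) ∈ γ (g * h))
    (hnontrivial : ∀ g : G, γ g ≠ ⊤) :
    ∃ g₀ g₁ : G, g₀ ≠ g₁ ∧ γ g₀ = Submodule.span F {e} ∧ γ g₁ = V ∧
      ∀ g : G, g ≠ g₀ → g ≠ g₁ → γ g = ⊥ :=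
  B12lambda_only_main_grading_general hchar mul e V b he hcompl hmulV halt hskew hbeV u v hu hv huv
    hbasis lam hlam φ hφu hφv γ hint hsuper hstar hnontrivial
end
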